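/- (Degree and rank bounds for the Client-Waiter construction.) Let φ be a CNF formula with clauses C₁,…,Cₘ over variables x₁,…,xₙ, y₁,…,yₙ in which every clause has exactly 3 literals, every variable appears in at most 7 clauses, and every clause contains at least one literal on an x-variable. Define the hypergraph H on the 8n vertices ⋃₁≤i≤n Sᵢ ∪ Fᵢ, where Sᵢ = {sᵢ⁰, sᵢᵀ, sᵢᶠ, sᵢ¹} and Fᵢ = {fᵢ⁰, fᵢᵀ, fᵢᵀ', fᵢᶠ}, with hyperedges: (block) every 3-element subset of Sᵢ and every 3-element subset of Fᵢ; (pair) the four sets {sᵢ⁰, sᵢᵀ, fᵢ⁰, fᵢᵀ}, {sᵢ⁰, fᵢᶠ, fᵢᵀ, sᵢᶠ}, {sᵢ⁰, fᵢᶠ, sᵢᵀ, fᵢᵀ'}, {sᵢ⁰, sᵢᶠ, fᵢ⁰, fᵢᵀ'} for each i; (clause) for each clause Cⱼ = {lⱼ¹, lⱼ², lⱼ³}, all sets h₁ ∪ h₂ ∪ h₃ where hₖ ∈ Hⱼᵏ, with Hⱼᵏ = {{sᵢ⁰, sᵢᵀ}} if lⱼᵏ = xᵢ, Hⱼᵏ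 = {{sᵢ⁰, sᵢᶠ}} if lⱼᵏ = ¬xᵢ, Hⱼᵏ = {{fᵢ⁰, fᵢᵀ}, {fᵢ⁰, fᵢᵀ'}} if lⱼᵏ = yᵢ, and Hⱼᵏ = {{fᵢᶠ}} if lⱼᵏ = ¬yᵢ. Then every hyperedge of H has size at most 6 and every vertex of H has degree at most 35. -/

import Mathlib

/-- Vertices of the Client-Waiter construction: for each `i`, the four
vertices `sᵢ⁰, sᵢᵀ, sᵢᶠ, sᵢ¹` of `Sᵢ` and the four vertices
`fᵢ⁰, fᵢᵀ, fᵢᵀ', fᵢᶠ` of `Fᵢ`. -/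
inductive CWVertex
  | s0 : ℕ → CWVertex
  | sT : ℕ → CWVertex
  | sF : ℕ → CWVertex
  | s1 : ℕ → CWVertex
  | f0 : ℕ → CWVertex
  | fT : ℕ → CWVertex
  | fT' : ℕ → CWVertex
  | fF : ℕ → CWVertex
deriving DecidableEq

open CWVertex

/-- A literal of the Paired-SAT formula: `((true, i), b)` is the literal on
the variable `xᵢ` of polarity `b`, and `((false, i), b)` is the literal on
the variable `yᵢ` of polarity `b`. -/
abbrev CWLit := (Bool × ℕ) × Bool

/-- The set `Sᵢ`. -/
def Sset (i : ℕ) : Finset CWVertex := {s0 i, sT i, sF i, s1 i}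

/-- The set `Fᵢ`. -/
def Fset (i : ℕ) : Finset CWVertex := {f0 i, fT i, fT' i, fF i}

/-- The block-hyperedges for index `i`: every 3-element subset of `Sᵢ` and
every 3-element subset of `Fᵢ`. -/
noncomputable def blockEdges (i : ℕ) : List (Finset CWVertex) :=
  (Finset.powersetCard 3 (Sset i)).toList ++ (Finset.powersetCard 3 (Fset i)).toList

/-- The four pair-hyperedges for index `i`. -/
def pairEdges (i : ℕ) : List (Finset CWVertex) :=
  [ {s0 i, sT i, f0 i, fT i},
    {s0 i, fF i, fT i, sF i},
    {s0 i, fF i, sT i, fT' i},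
    {s0 i, sF i, f0 i, fT' i} ]

/-- The set `Hⱼᵏ` associated with a literal: `{{sᵢ⁰, sᵢᵀ}}` for `xᵢ`,
`{{sᵢ⁰, sᵢᶠ}}` for `¬xᵢ`, `{{fᵢ⁰, fᵢᵀ}, {fᵢ⁰, fᵢᵀ'}}` for `yᵢ`, and
`{{fᵢᶠ}}` for `¬yᵢ`. -/
def Hlit : CWLit → List (Finset CWVertex)
  | ((true, i), true) => [{s0 i, sT i}]
  | ((true, i), false) => [{s0 i, sF i}]
  | ((false, i), true) => [{f0 i, fT i}, {f0 i, fT' i}]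
  | ((false, i), false) => [{fF i}]

/-- The clause-hyperedges associated with a clause `Cⱼ = {lⱼ¹, lⱼ², lⱼ³}`:
all the sets `h₁ ∪ h₂ ∪ h₃` where `hₖ ∈ Hⱼᵏ`. -/
noncomputable def clauseEdges (C : Finset CWLit) : List (Finset CWVertex) :=
  (C.toList.map Hlit).foldr
    (fun hs acc => hs.flatMap (fun h => acc.map (fun e => h ∪ e))) [∅]

/-!
Every block edge has 3 vertices, every pair edge 4, and a clause edge is a union of three
sets `hₖ ∈ Hⱼᵏ` of at most 2 vertices each. A vertex of the gadget `Sᵢ ∪ Fᵢ` of a variable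
lies only in edges built from that gadget or from clauses mentioning the variable: in
`C(3, 2) = 3` block edges, at most 4 pair edges, and, for each of the at most 7 clauses
containing the variable, in at most `1 · 2 · 2 = 4` clause edges, because the `x`-literal of
the clause contributes a single set. Hence the degree is at most `3 + 4 + 7 · 4 = 35`.
-/

open Finset

namespace List

variable {α β : Type*}

theorem Nodup.countP_le_one {l : List α} (hl : l.Nodup) {p : α → Bool}
    (hp : ∀ a b, p a → p b → a = b) : l.countP p ≤ 1 := by
  classical
  rw [countP_eq_length_filter, ← toFinset_card_of_nodup (hl.filter p), Finset.card_le_one]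
  intro a ha b hb
  simp only [mem_toFinset, mem_filter] at ha hb
  exact hp a b ha.2 hb.2

theorem countP_flatMap_le_mul_countP {l : List α} {f : α → List β} {p : β → Bool}
    {q : α → Bool} {K : ℕ} (hle : ∀ a ∈ l, q a → (f a).countP p ≤ K)
    (hzero : ∀ a ∈ l, ∀ b ∈ f a, p b → q a) :
    (l.flatMap f).countP p ≤ K * l.countP q := by
  induction l with
  | nil => simp
  | cons a t ih =>
    rw [flatMap_cons, countP_append, countP_cons]
    have ht := ih (fun a ha => hle a (mem_cons_of_mem _ ha))
      (fun a ha => hzero a (mem_cons_of_mem _ ha))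
    by_cases hqa : q a
    · have := hle a mem_cons_self hqa
      simp only [hqa, if_true]
      lia
    · have : (f a).countP p = 0 :=
        countP_eq_zero.mpr fun b hb hpb => hqa (hzero a mem_cons_self b hb hpb)
      simp only [hqa, this]
      lia

theorem countP_flatMap_range_succ_le {f : ℕ → List β} {p : β → Bool}
    {K j : ℕ} (hK : ∀ i, (f i).countP p ≤ K) (hloc : ∀ i, ∀ b ∈ f i, p b → i = j) (n : ℕ) :
    ((List.range n).flatMap fun i => f (i + 1)).countP p ≤ K := by
  have hone : (List.range n).countP (fun i => decide (i + 1 = j)) ≤ 1 :=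
    nodup_range.countP_le_one fun a b ha hb => by simp only [decide_eq_true_eq] at ha hb; lia
  have := countP_flatMap_le_mul_countP (l := range n) (fun i _ _ => hK (i + 1))
    fun i _ b hb hpb => decide_eq_true (hloc (i + 1) b hb hpb)
  exact this.trans ((Nat.mul_le_mul_left K hone).trans_eq (mul_one K))

end List

namespace Finset

variable {α : Type*}

theorem countP_toList_eq_card_filter (s : Finset α) (p : α → Prop) [DecidablePred p] :
    s.toList.countP (fun a => decide (p a)) = #(s.filter p) := by
  rw [← Multiset.coe_countP, coe_toList, Multiset.countP_eq_card_filter]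
  rfl

variable [DecidableEq α]

theorem filter_mem_powersetCard_eq_empty {S : Finset α} {v : α} (hv : v ∉ S) (k : ℕ) :
    (S.powersetCard k).filter (v ∈ ·) = ∅ :=
  filter_eq_empty_iff.mpr fun _ he hve => hv ((mem_powersetCard.mp he).1 hve)

theorem card_filter_mem_powersetCard_le (S : Finset α) (k : ℕ) (v : α) :
    #((S.powersetCard k).filter (v ∈ ·)) ≤ (#S - 1).choose (k - 1) := by
  by_cases hv : v ∈ S
  · rcases Nat.eq_zero_or_pos k with rfl | hk
    · simp [filter_singleton]
    · have h := card_filter_powersetCard_subset {v} S k (singleton_subset_iff.mpr hv) hk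
      simpa only [singleton_subset_iff, card_singleton] using h.le
  · simp [filter_mem_powersetCard_eq_empty hv]

end Finset

section UnionProducts

variable {β : Type*} [DecidableEq β]

def unionProducts (hss : List (List (Finset β))) : List (Finset β) :=
  hss.foldr (fun hs acc => hs.flatMap fun h => acc.map (h ∪ ·)) [∅]

@[simp]
theorem unionProducts_nil : unionProducts ([] : List (List (Finset β))) = [∅] := rfl

@[simp]
theorem unionProducts_cons (hs : List (Finset β)) (hss : List (List (Finset β))) :
    unionProducts (hs :: hss) = hs.flatMap fun h => (unionProducts hss).map (h ∪ ·) := rfl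

theorem length_unionProducts (hss : List (List (Finset β))) :
    (unionProducts hss).length = (hss.map List.length).prod := by
  induction hss with
  | nil => rfl
  | cons hs hss ih => simp [List.length_flatMap, ih]

theorem card_le_of_mem_unionProducts {hss : List (List (Finset β))} {k : ℕ}
    (hk : ∀ hs ∈ hss, ∀ h ∈ hs, #h ≤ k) {e : Finset β} (he : e ∈ unionProducts hss) :
    #e ≤ k * hss.length := by
  induction hss generalizing e with
  | nil => simp_all
  | cons hs hss ih =>
    simp only [unionProducts_cons, List.mem_flatMap, List.mem_map] at he
    obtain ⟨h, hh, e', he', rfl⟩ := he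
    have := ih (fun hs' hs'_mem => hk hs' (List.mem_cons_of_mem _ hs'_mem)) he'
    have := hk hs List.mem_cons_self h hh
    grw [card_union_le, List.length_cons]
    lia

theorem exists_mem_of_mem_unionProducts {hss : List (List (Finset β))} {e : Finset β}
    (he : e ∈ unionProducts hss) {v : β} (hv : v ∈ e) : ∃ hs ∈ hss, ∃ h ∈ hs, v ∈ h := by
  induction hss generalizing e with
  | nil => simp_all
  | cons hs hss ih =>
    simp only [unionProducts_cons, List.mem_flatMap, List.mem_map] at he
    obtain ⟨h, hh, e', he', rfl⟩ := he
    rcases mem_union.mp hv with hv | hv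
    · exact ⟨hs, List.mem_cons_self, h, hh, hv⟩
    · obtain ⟨hs', hs'_mem, h', hh', hv'⟩ := ih he' hv
      exact ⟨hs', List.mem_cons_of_mem _ hs'_mem, h', hh', hv'⟩

end UnionProducts

theorem clauseEdges_eq_unionProducts (C : Finset CWLit) :
    clauseEdges C = unionProducts (C.toList.map Hlit) := rfl

def CWVertex.var : CWVertex → Bool × ℕ
  | s0 i | sT i | sF i | s1 i => (true, i)
  | f0 i | fT i | fT' i | fF i => (false, i)

theorem var_snd_of_mem_Sset {v : CWVertex} {i : ℕ} (hv : v ∈ Sset i) : v.var.2 = i := by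
  simp only [Sset, mem_insert, mem_singleton] at hv
  rcases hv with rfl | rfl | rfl | rfl <;> rfl

theorem var_snd_of_mem_Fset {v : CWVertex} {i : ℕ} (hv : v ∈ Fset i) : v.var.2 = i := by
  simp only [Fset, mem_insert, mem_singleton] at hv
  rcases hv with rfl | rfl | rfl | rfl <;> rfl

theorem card_Sset (i : ℕ) : #(Sset i) = 4 := by simp [Sset]

theorem card_Fset (i : ℕ) : #(Fset i) = 4 := by simp [Fset]

theorem notMem_Sset_or_notMem_Fset (v : CWVertex) (i : ℕ) : v ∉ Sset i ∨ v ∉ Fset i := by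
  cases v <;> simp [Sset, Fset]

theorem mem_blockEdges {e : Finset CWVertex} {i : ℕ} :
    e ∈ blockEdges i ↔ e ∈ (Sset i).powersetCard 3 ∨ e ∈ (Fset i).powersetCard 3 := by
  simp only [blockEdges, List.mem_append, mem_toList]

theorem card_of_mem_blockEdges {e : Finset CWVertex} {i : ℕ} (he : e ∈ blockEdges i) :
    #e = 3 := by
  rcases mem_blockEdges.mp he with he | he <;> exact (mem_powersetCard.mp he).2

theorem var_snd_of_mem_blockEdges {e : Finset CWVertex} {i : ℕ} (he : e ∈ blockEdges i)
    {v : CWVertex} (hv : v ∈ e) : v.var.2 = i := by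
  rcases mem_blockEdges.mp he with he | he
  · exact var_snd_of_mem_Sset ((mem_powersetCard.mp he).1 hv)
  · exact var_snd_of_mem_Fset ((mem_powersetCard.mp he).1 hv)

theorem countP_mem_blockEdges_le (v : CWVertex) (i : ℕ) :
    (blockEdges i).countP (fun e => decide (v ∈ e)) ≤ 3 := by
  have hS := card_filter_mem_powersetCard_le (Sset i) 3 v
  have hF := card_filter_mem_powersetCard_le (Fset i) 3 v
  rw [card_Sset] at hS
  rw [card_Fset] at hF
  rw [blockEdges, List.countP_append, countP_toList_eq_card_filter,
    countP_toList_eq_card_filter]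
  rcases notMem_Sset_or_notMem_Fset v i with hv | hv <;>
    rw [filter_mem_powersetCard_eq_empty hv, card_empty] <;> simp_all

theorem card_le_four_of_mem_pairEdges {e : Finset CWVertex} {i : ℕ} (he : e ∈ pairEdges i) :
    #e ≤ 4 := by
  simp only [pairEdges, List.mem_cons, List.not_mem_nil, or_false] at he
  rcases he with rfl | rfl | rfl | rfl <;> exact card_le_four

theorem var_snd_of_mem_pairEdges {e : Finset CWVertex} {i : ℕ} (he : e ∈ pairEdges i)
    {v : CWVertex} (hv : v ∈ e) : v.var.2 = i := by
  simp only [pairEdges, List.mem_cons, List.not_mem_nil, or_false] at he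
  rcases he with rfl | rfl | rfl | rfl <;>
    simp only [mem_insert, mem_singleton] at hv <;> rcases hv with rfl | rfl | rfl | rfl <;> rfl

theorem countP_mem_pairEdges_le (v : CWVertex) (i : ℕ) :
    (pairEdges i).countP (fun e => decide (v ∈ e)) ≤ 4 :=
  List.countP_le_length

theorem card_le_two_of_mem_Hlit {l : CWLit} {h : Finset CWVertex} (hh : h ∈ Hlit l) :
    #h ≤ 2 := by
  obtain ⟨⟨_ | _, i⟩, _ | _⟩ := l <;>
    simp only [Hlit, List.mem_cons, List.not_mem_nil, or_false] at hh <;>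
    rcases hh with rfl | rfl <;> first | exact card_le_two | simp

theorem var_eq_of_mem_Hlit {l : CWLit} {h : Finset CWVertex} (hh : h ∈ Hlit l)
    {v : CWVertex} (hv : v ∈ h) : v.var = l.1 := by
  obtain ⟨⟨_ | _, i⟩, _ | _⟩ := l <;>
    simp only [Hlit, List.mem_cons, List.not_mem_nil, or_false] at hh <;>
    rcases hh with rfl | rfl <;>
    simp only [mem_insert, mem_singleton] at hv <;> rcases hv with rfl | rfl <;> rfl

theorem length_Hlit_le_two (l : CWLit) : (Hlit l).length ≤ 2 := by
  obtain ⟨⟨_ | _, i⟩, _ | _⟩ := l <;> simp [Hlit]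

theorem length_Hlit_of_fst_fst {l : CWLit} (hl : l.1.1 = true) : (Hlit l).length = 1 := by
  obtain ⟨⟨_ | _, i⟩, _ | _⟩ := l <;> simp_all [Hlit]

theorem card_le_six_of_mem_clauseEdges {C : Finset CWLit} (hC : #C = 3) {e : Finset CWVertex}
    (he : e ∈ clauseEdges C) : #e ≤ 6 := by
  rw [clauseEdges_eq_unionProducts] at he
  have h := card_le_of_mem_unionProducts (k := 2) (by
    simp only [List.mem_map, mem_toList]
    rintro _ ⟨l, -, rfl⟩ h hh
    exact card_le_two_of_mem_Hlit hh) he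
  rwa [List.length_map, length_toList, hC] at h

theorem length_clauseEdges_le_four {C : Finset CWLit} (hC : #C = 3)
    (hx : ∃ l ∈ C, l.1.1 = true) : (clauseEdges C).length ≤ 4 := by
  obtain ⟨l, hl, hlx⟩ := hx
  have hrest : ∏ l' ∈ C.erase l, (Hlit l').length ≤ 2 ^ 2 := by
    simpa [card_erase_of_mem hl, hC] using
      prod_le_pow_card (C.erase l) _ 2 fun l' _ => length_Hlit_le_two l'
  rw [clauseEdges_eq_unionProducts, length_unionProducts, List.map_map, prod_map_toList,
    ← mul_prod_erase C _ hl]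
  simpa [length_Hlit_of_fst_fst hlx] using hrest

theorem exists_mem_of_mem_clauseEdges {C : Finset CWLit} {e : Finset CWVertex}
    (he : e ∈ clauseEdges C) {v : CWVertex} (hv : v ∈ e) : ∃ b, (v.var, b) ∈ C := by
  rw [clauseEdges_eq_unionProducts] at he
  obtain ⟨_, hs_mem, h, hh, hvh⟩ := exists_mem_of_mem_unionProducts he hv
  obtain ⟨l, hl, rfl⟩ := List.mem_map.mp hs_mem
  exact ⟨l.2, by rw [var_eq_of_mem_Hlit hh hvh]; exact mem_toList.mp hl⟩

theorem countP_mem_flatMap_clauseEdges_le {φ : List (Finset CWLit)}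
    (hsize : ∀ C ∈ φ, #C = 3) (hxlit : ∀ C ∈ φ, ∃ l ∈ C, l.1.1 = true) (v : CWVertex) :
    (φ.flatMap clauseEdges).countP (fun e => decide (v ∈ e)) ≤
      4 * φ.countP (fun C => decide (∃ b, (v.var, b) ∈ C)) :=
  List.countP_flatMap_le_mul_countP
    (fun C hC _ => List.countP_le_length.trans (length_clauseEdges_le_four (hsize C hC) (hxlit C hC)))
    fun _ _ _ he hv => decide_eq_true (exists_mem_of_mem_clauseEdges he (of_decide_eq_true hv))

theorem clientWaiter_bounds_general (n : ℕ) (φ : List (Finset CWLit))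
    (hsize : ∀ C ∈ φ, C.card = 3)
    (hdeg : ∀ v : Bool × ℕ, φ.countP (fun C => decide (∃ b : Bool, (v, b) ∈ C)) ≤ 7)
    (hxlit : ∀ C ∈ φ, ∃ l ∈ C, l.1.1 = true) :
    ∀ H : List (Finset CWVertex),
      H = (List.range n).flatMap (fun i₀ => blockEdges (i₀ + 1)) ++
          (List.range n).flatMap (fun i₀ => pairEdges (i₀ + 1)) ++
          φ.flatMap clauseEdges →
      (∀ e ∈ H, e.card ≤ 6) ∧
      (∀ v : CWVertex, H.countP (fun e => decide (v ∈ e)) ≤ 35) := by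
  rintro H rfl
  refine ⟨fun e he => ?_, fun v => ?_⟩
  · simp only [List.mem_append, List.mem_flatMap] at he
    rcases he with (⟨i, -, he⟩ | ⟨i, -, he⟩) | ⟨C, hC, he⟩
    · exact (card_of_mem_blockEdges he).trans_le (by norm_num)
    · exact (card_le_four_of_mem_pairEdges he).trans (by norm_num)
    · exact card_le_six_of_mem_clauseEdges (hsize C hC) he
  · have hblock := List.countP_flatMap_range_succ_le (countP_mem_blockEdges_le v)
      (fun i _ he hv => (var_snd_of_mem_blockEdges he (of_decide_eq_true hv)).symm) n
    have hpair := List.countP_flatMap_range_succ_le (countP_mem_pairEdges_le v)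
      (fun i _ he hv => (var_snd_of_mem_pairEdges he (of_decide_eq_true hv)).symm) n
    have hclause := countP_mem_flatMap_clauseEdges_le hsize hxlit v
    have := hdeg v.var
    rw [List.countP_append, List.countP_append]
    lia

/-- Degree and rank bounds for the Client-Waiter construction: if `φ` is a CNF
formula over the variables `x₁, …, xₙ, y₁, …, yₙ` in which every clause has
exactly `3` literals, every variable appears in at most `7` clauses, and every
clause contains at least one literal on an `x`-variable, then in the
constructed hypergraph every hyperedge has size at most `6` and every vertex
has degree at most `35`. -/
theorem clientWaiter_bounds (n : ℕ) (φ : List (Finset CWLit))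
    (hvars : ∀ C ∈ φ, ∀ l ∈ C, 1 ≤ l.1.2 ∧ l.1.2 ≤ n)
    (hsize : ∀ C ∈ φ, C.card = 3)
    (hdeg : ∀ v : Bool × ℕ, φ.countP (fun C => decide (∃ b : Bool, (v, b) ∈ C)) ≤ 7)
    (hxlit : ∀ C ∈ φ, ∃ l ∈ C, l.1.1 = true) :
    ∀ H : List (Finset CWVertex),
      H = (List.range n).flatMap (fun i₀ => blockEdges (i₀ + 1)) ++
          (List.range n).flatMap (fun i₀ => pairEdges (i₀ + 1)) ++
          φ.flatMap clauseEdges →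
      (∀ e ∈ H, e.card ≤ 6) ∧
      (∀ v : CWVertex, H.countP (fun e => decide (v ∈ e)) ≤ 35) :=
  clientWaiter_bounds_general n φ hsize hdeg hxlit
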